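/- arXiv:2307.15434 — 7 statements merged into one kernel-verified Lean document; each statement's English description precedes it below -/
import Mathlib

section
/- For every natural number M, all nonnegative real numbers w_1,…,w_M and all real angles φ_1,…,φ_M, one has (Σ_{m=1}^M w_m cos²φ_m)·(Σ_{m=1}^M w_m sin²φ_m) − (Σ_{m=1}^M w_m cos φ_m sin φ_m)² ≤ (Σ_{m=1}^M w_m)²/4. Consequently, whenever the left-hand side D is strictly positive, (Σ_{m=1}^M w_m)/D ≥ 4/(Σ_{m=1}^M w_m). -/
open Real Finset

/-- Core inequality of Lemma 1 (Appendix A): for nonnegative weights `w_m`,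
`(Σ w_m cos²φ_m)(Σ w_m sin²φ_m) − (Σ w_m cos φ_m sin φ_m)² ≤ (Σ w_m)²/4`,
and consequently, whenever the left-hand side `D` is positive,
`(Σ w_m)/D ≥ 4/(Σ w_m)`. -/
theorem fisher_determinant_upper_bound (M : ℕ) (w φ : Fin M → ℝ) (hw : ∀ m, 0 ≤ w m) :
    (∑ m, w m * cos (φ m) ^ 2) * (∑ m, w m * sin (φ m) ^ 2)
        - (∑ m, w m * cos (φ m) * sin (φ m)) ^ 2 ≤ (∑ m, w m) ^ 2 / 4
    ∧ ∀ D : ℝ,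
        D = (∑ m, w m * cos (φ m) ^ 2) * (∑ m, w m * sin (φ m) ^ 2)
              - (∑ m, w m * cos (φ m) * sin (φ m)) ^ 2 →
        0 < D → 4 / (∑ m, w m) ≤ (∑ m, w m) / D := by
  set A := ∑ m, w m * cos (φ m) ^ 2 with hA
  set B := ∑ m, w m * sin (φ m) ^ 2 with hB
  set C := ∑ m, w m * cos (φ m) * sin (φ m) with hC
  set S := ∑ m, w m with hS
  have hA0 : 0 ≤ A := Finset.sum_nonneg fun m _ =>
    mul_nonneg (hw m) (sq_nonneg _)
  have hB0 : 0 ≤ B := Finset.sum_nonneg fun m _ =>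
    mul_nonneg (hw m) (sq_nonneg _)
  have hS0 : 0 ≤ S := Finset.sum_nonneg fun m _ => hw m
  have hAB : A + B = S := by
    rw [hA, hB, hS, ← Finset.sum_add_distrib]
    exact Finset.sum_congr rfl fun m _ => by
      rw [← mul_add, cos_sq_add_sin_sq, mul_one]
  have key : A * B - C ^ 2 ≤ S ^ 2 / 4 := by
    have h1 : A * B ≤ ((A + B) / 2) ^ 2 := by nlinarith [sq_nonneg (A - B)]
    nlinarith [sq_nonneg C]
  refine ⟨key, fun D hD hDpos => ?_⟩
  have hD4 : 4 * D ≤ S ^ 2 := by rw [hD]; nlinarith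
  have hSpos : 0 < S := by
    rcases lt_or_eq_of_le hS0 with h | h
    · exact h
    · exfalso; nlinarith
  rw [div_le_div_iff₀ hSpos hDpos]
  nlinarith
end

section
/- (Lemma 1) Fix an integer M ≥ 3, constants C0 > 0 and γ̃ > 0, and for a time-allocation vector η = (η_1,…,η_M) with η_m ≥ 0, Σ_m η_m = 1, and azimuth angles φ = (φ_1,…,φ_M), define CRLB(η, φ) = C0·(Σ_{m=1}^M η_m γ̃) / (Σ_{1≤j<i≤M} η_j γ̃ · η_i γ̃ · sin²(φ_i − φ_j)), defined whenever the denominator is positive. Then CRLB(η, φ) ≥ 4C0/γ̃ for every such (η, φ), and equality holds at η_m = 1/M and φ_m = 2π(m−1)/M for m = 1,…,M. In particular, when γ̃ = (ΔT β₀² L² / (Δt d̲⁴ σ_s²)) · (d̲² − (H_BS − H_IRS)²)/d̲² (all constants positive, d̲ > |H_BS − H_IRS|), the minimum CRLB equals 4 C0 Δt d̲⁶ σ_s² / (ΔT β₀² L² (d̲² − (H_BS − H_IRS)²)). -/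
/-!
With `u_m = exp (2 i φ_m)`, the identity `4 sin² (φ_i - φ_j) = 2 (1 - Re (u_i * conj u_j))`
gives `4 ∑_{j<i} η_j η_i sin² (φ_i - φ_j) = (∑ η)² - ‖∑ η_m u_m‖²`. So when `∑ η = 1` the
pairwise sum, which is the CRLB denominator divided by `γ²`, is at most `1/4`, with equality
iff `∑ η_m u_m = 0`. For equal weights and equally spaced azimuths `u_m = ζ^(2m)` with `ζ` a
primitive `M`-th root of unity; as `ζ² ≠ 1` for `M ≥ 3`, this geometric sum vanishes.
-/

open Real Finset

/-- The single-target localization CRLB for time allocation `η`, azimuths `φ`, equal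
equivalent SNR `γ` and estimator constant `C0`:
`CRLB(η,φ) = C0·(Σ_m η_m γ) / (Σ_{j<i} η_j γ · η_i γ · sin²(φ_i − φ_j))`. -/
noncomputable def crlbEq (M : ℕ) (C0 γ : ℝ) (η φ : Fin M → ℝ) : ℝ :=
  C0 * (∑ m, η m * γ) /
    (∑ i : Fin M, ∑ j ∈ Finset.Iio i, (η j * γ) * (η i * γ) * sin (φ i - φ j) ^ 2)

section

variable {ι : Type*} [Fintype ι]

theorem sq_norm_sum_mul_exp (w θ : ι → ℝ) :
    ‖∑ m, (w m : ℂ) * Complex.exp (θ m * Complex.I)‖ ^ 2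
      = ∑ i, ∑ j, w i * w j * cos (θ i - θ j) := by
  simp only [Complex.sq_norm, Complex.normSq_apply, Complex.re_sum, Complex.im_sum,
    Complex.re_ofReal_mul, Complex.im_ofReal_mul, Complex.exp_ofReal_mul_I_re,
    Complex.exp_ofReal_mul_I_im, sum_mul_sum, ← sum_add_distrib, cos_sub]
  refine sum_congr rfl fun i _ => sum_congr rfl fun j _ => ?_
  ring

variable [LinearOrder ι] [LocallyFiniteOrderBot ι]

theorem sum_sum_eq_two_nsmul_sum_sum_Iio {R : Type*} [AddCommMonoid R] (F : ι → ι → R)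
    (hsymm : ∀ i j, F i j = F j i) (hdiag : ∀ i, F i i = 0) :
    ∑ i, ∑ j, F i j = 2 • ∑ i, ∑ j ∈ Iio i, F i j := by
  have hIio : ∀ i, ∑ j ∈ Iio i, F i j = ∑ j, if j < i then F i j else 0 := fun i => by
    rw [← sum_filter, filter_gt_eq_Iio]
  have hupper : ∑ i, ∑ j ∈ Iio i, F i j = ∑ i, ∑ j, if i < j then F i j else 0 := by
    simp_rw [hIio]
    rw [sum_comm]
    simp_rw [hsymm]
  rw [two_nsmul]
  nth_rewrite 2 [hupper]
  simp_rw [hIio, ← sum_add_distrib]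
  refine sum_congr rfl fun i _ => sum_congr rfl fun j _ => ?_
  rcases lt_trichotomy j i with h | rfl | h
  · simp [h, h.not_gt]
  · simp [hdiag]
  · simp [h, h.not_gt]

noncomputable def pairwiseSinSq (w φ : ι → ℝ) : ℝ :=
  ∑ i, ∑ j ∈ Iio i, w j * w i * sin (φ i - φ j) ^ 2

theorem four_mul_pairwiseSinSq (w φ : ι → ℝ) :
    4 * pairwiseSinSq w φ
      = (∑ m, w m) ^ 2
        - ‖∑ m, (w m : ℂ) * Complex.exp ((2 * φ m : ℝ) * Complex.I)‖ ^ 2 := by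
  have hpair : ∀ i j, w i * w j - w i * w j * cos (2 * φ i - 2 * φ j)
      = 2 * (w j * w i * sin (φ i - φ j) ^ 2) := fun i j => by
    rw [← mul_sub, cos_two_mul]
    linear_combination (-2 * w i * w j) * sin_sq_add_cos_sq (φ i - φ j)
  rw [sq_norm_sum_mul_exp, sq, sum_mul_sum, ← sum_sub_distrib]
  simp_rw [← sum_sub_distrib, hpair, ← mul_sum]
  rw [sum_sum_eq_two_nsmul_sum_sum_Iio (fun i j => w j * w i * sin (φ i - φ j) ^ 2)
    (fun i j => by rw [← neg_sub, sin_neg]; ring) (fun i => by simp), pairwiseSinSq]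
  ring

theorem pairwiseSinSq_le_of_sum_eq_one (w φ : ι → ℝ) (hw : ∑ m, w m = 1) :
    pairwiseSinSq w φ ≤ 1 / 4 := by
  have h := four_mul_pairwiseSinSq w φ
  rw [hw] at h
  linarith [sq_nonneg ‖∑ m, (w m : ℂ) * Complex.exp ((2 * φ m : ℝ) * Complex.I)‖]

theorem pairwiseSinSq_mul_const (w φ : ι → ℝ) (c : ℝ) :
    pairwiseSinSq (fun m => w m * c) φ = c ^ 2 * pairwiseSinSq w φ := by
  simp only [pairwiseSinSq, mul_sum]
  refine sum_congr rfl fun i _ => sum_congr rfl fun j _ => ?_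
  ring

end

theorem sum_exp_two_pi_mul_div_eq_zero {M k : ℕ} (hk : ¬ M ∣ k) :
    ∑ m : Fin M, Complex.exp ((2 * π * k * m / M : ℝ) * Complex.I) = 0 := by
  obtain rfl | hM := eq_or_ne M 0
  · simp
  have hζ := Complex.isPrimitiveRoot_exp M hM
  set z := Complex.exp (2 * π * Complex.I / M) ^ k
  have hz : z ≠ 1 := by rwa [Ne, hζ.pow_eq_one_iff_dvd]
  have hzM : z ^ M = 1 := by rw [← pow_mul, mul_comm k M, pow_mul, hζ.pow_eq_one, one_pow]
  calc ∑ m : Fin M, Complex.exp ((2 * π * k * m / M : ℝ) * Complex.I)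
      = ∑ m ∈ range M, z ^ m := by
        rw [← Fin.sum_univ_eq_sum_range]
        refine sum_congr rfl fun m _ => ?_
        rw [← pow_mul, ← Complex.exp_nat_mul]
        push_cast
        ring_nf
    _ = 0 := by rw [geom_sum_eq hz, hzM, sub_self, zero_div]

theorem pairwiseSinSq_equiangular {M : ℕ} (hM : 3 ≤ M) :
    pairwiseSinSq (fun _ : Fin M => 1 / (M : ℝ)) (fun m => 2 * π * (m : ℕ) / M) = 1 / 4 := by
  have hsum : ∑ _m : Fin M, (1 / M : ℝ) = 1 := by simp [show M ≠ 0 by omega]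
  have hexp : ∑ m : Fin M,
      ((1 / M : ℝ) : ℂ) * Complex.exp ((2 * (2 * π * (m : ℕ) / M) : ℝ) * Complex.I) = 0 := by
    have hdvd : ¬ M ∣ 2 := fun h => by have := Nat.le_of_dvd two_pos h; omega
    have harg : ∀ m : Fin M, (2 * (2 * π * (m : ℕ) / M) : ℝ) = 2 * π * (2 : ℕ) * m / M :=
      fun m => by push_cast; ring
    simp only [harg]
    rw [← mul_sum, sum_exp_two_pi_mul_div_eq_zero hdvd, mul_zero]
  have h :=
    four_mul_pairwiseSinSq (fun _ : Fin M => 1 / (M : ℝ)) (fun m => 2 * π * (m : ℕ) / M)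
  rw [hsum, hexp, norm_zero] at h
  linarith

theorem crlbEq_eq (M : ℕ) (C0 γ : ℝ) (η φ : Fin M → ℝ) :
    crlbEq M C0 γ η φ = C0 * (∑ m, η m) / (γ * pairwiseSinSq η φ) := by
  change C0 * _ / pairwiseSinSq (fun m => η m * γ) φ = _
  rw [pairwiseSinSq_mul_const, ← sum_mul]
  rcases eq_or_ne γ 0 with rfl | hγ
  · simp
  · rw [pow_two, mul_comm _ γ, mul_left_comm, mul_assoc γ γ, mul_div_mul_left _ _ hγ]

theorem lemma1_crlb_lower_bound_general (M : ℕ) (hM : 3 ≤ M) (C0 γ : ℝ) (hC0 : 0 < C0) (hγ : 0 < γ)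
    (ΔT Δt β₀ L σs d HBS HIRS : ℝ) :
    (∀ η φ : Fin M → ℝ, (∀ m, 0 ≤ η m) → (∑ m, η m) = 1 →
        0 < (∑ i : Fin M, ∑ j ∈ Finset.Iio i, (η j * γ) * (η i * γ) * sin (φ i - φ j) ^ 2) →
        4 * C0 / γ ≤ crlbEq M C0 γ η φ)
    ∧ crlbEq M C0 γ (fun _ => 1 / M) (fun m => 2 * π * (m : ℕ) / M) = 4 * C0 / γ
    ∧ (γ = ΔT * β₀ ^ 2 * L ^ 2 / (Δt * d ^ 4 * σs ^ 2) * ((d ^ 2 - (HBS - HIRS) ^ 2) / d ^ 2) →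
        4 * C0 / γ
          = 4 * C0 * Δt * d ^ 6 * σs ^ 2 / (ΔT * β₀ ^ 2 * L ^ 2 * (d ^ 2 - (HBS - HIRS) ^ 2))) := by
  refine ⟨fun η φ _ hsum hpos => ?_, ?_, fun hγ_eq => ?_⟩
  · change 0 < pairwiseSinSq (fun m => η m * γ) φ at hpos
    rw [pairwiseSinSq_mul_const] at hpos
    have hP := pos_of_mul_pos_right hpos (sq_nonneg γ)
    calc 4 * C0 / γ = C0 * 1 / (γ * (1 / 4)) := by field_simp
      _ ≤ C0 * 1 / (γ * pairwiseSinSq η φ) := by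
        gcongr
        exact pairwiseSinSq_le_of_sum_eq_one η φ hsum
      _ = crlbEq M C0 γ η φ := by rw [crlbEq_eq, hsum]
  · have hsum : ∑ _m : Fin M, (1 / M : ℝ) = 1 := by simp [show M ≠ 0 by omega]
    rw [crlbEq_eq, pairwiseSinSq_equiangular hM, hsum]
    field_simp
  · rw [hγ_eq, div_mul_div_comm, div_div_eq_mul_div]
    congr 1
    ring

/-- Lemma 1: for `M ≥ 3` base stations with equal equivalent SNR `γ > 0`,
`CRLB(η,φ) ≥ 4C0/γ` for every time allocation `η` in the unit simplex and every
azimuth vector `φ` (with positive denominator), with equality at `η_m = 1/M`,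
`φ_m = 2π(m−1)/M`.  Moreover, when `γ` takes the particular value determined by the
system parameters, the minimum CRLB equals
`4 C0 Δt d⁶ σ_s² / (ΔT β₀² L² (d² − (H_BS − H_IRS)²))`. -/
theorem lemma1_crlb_lower_bound (M : ℕ) (hM : 3 ≤ M) (C0 γ : ℝ) (hC0 : 0 < C0) (hγ : 0 < γ)
    (ΔT Δt β₀ L σs d HBS HIRS : ℝ)
    (hΔT : 0 < ΔT) (hΔt : 0 < Δt) (hβ₀ : 0 < β₀) (hL : 0 < L) (hσ : 0 < σs)
    (hd : |HBS - HIRS| < d) :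
    (∀ η φ : Fin M → ℝ, (∀ m, 0 ≤ η m) → (∑ m, η m) = 1 →
        0 < (∑ i : Fin M, ∑ j ∈ Finset.Iio i, (η j * γ) * (η i * γ) * sin (φ i - φ j) ^ 2) →
        4 * C0 / γ ≤ crlbEq M C0 γ η φ)
    ∧ crlbEq M C0 γ (fun _ => 1 / M) (fun m => 2 * π * (m : ℕ) / M) = 4 * C0 / γ
    ∧ (γ = ΔT * β₀ ^ 2 * L ^ 2 / (Δt * d ^ 4 * σs ^ 2) * ((d ^ 2 - (HBS - HIRS) ^ 2) / d ^ 2) →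
        4 * C0 / γ
          = 4 * C0 * Δt * d ^ 6 * σs ^ 2 / (ΔT * β₀ ^ 2 * L ^ 2 * (d ^ 2 - (HBS - HIRS) ^ 2))) :=
  lemma1_crlb_lower_bound_general M hM C0 γ hC0 hγ ΔT Δt β₀ L σs d HBS HIRS
end

section
/- (Proposition 2) Fix an integer M ≥ 2 and real angles φ_1,…,φ_M, and define f(x) = (Σ_{m=1}^M x_m) / (Σ_{1≤j<i≤M} x_j x_i sin²(φ_i − φ_j)) for x ∈ ℝ^M with x_m ≥ 0 and positive denominator. If x and y are two such vectors that agree in all coordinates except coordinate m', where y_{m'} ≥ x_{m'}, then f(y) ≤ f(x). That is, the CRLB is monotonically nonincreasing in each coordinate x_m. -/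
open Real Finset

private lemma swap_sum' {M : ℕ} (f : Fin M → Fin M → ℝ) :
    ∑ i : Fin M, ∑ j ∈ Finset.Ioi i, f i j = ∑ i : Fin M, ∑ j ∈ Finset.Iio i, f j i := by
  rw [Finset.sum_sigma', Finset.sum_sigma']
  apply Finset.sum_nbij' (fun p => (⟨p.2, p.1⟩ : Σ _ : Fin M, Fin M))
    (fun p => (⟨p.2, p.1⟩ : Σ _ : Fin M, Fin M)) <;> simp [Finset.mem_sigma]

/-- The pair sum equals `P·R − Q²` where `P = Σ x cos², R = Σ x sin², Q = Σ x sin·cos`. -/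
private lemma D_eq {M : ℕ} (φ x : Fin M → ℝ) :
    ∑ i : Fin M, ∑ j ∈ Finset.Iio i, x j * x i * sin (φ i - φ j) ^ 2
      = (∑ m, x m * cos (φ m) ^ 2) * (∑ m, x m * sin (φ m) ^ 2)
        - (∑ m, x m * (sin (φ m) * cos (φ m))) ^ 2 := by
  set g : Fin M → Fin M → ℝ := fun i j => x j * x i * sin (φ i - φ j) ^ 2 with hg
  have hsymm : ∀ i j, g i j = g j i := by
    intro i j
    simp only [hg]
    rw [show φ i - φ j = -(φ j - φ i) by ring, sin_neg]
    ring
  have hdiag : ∀ i, g i i = 0 := by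
    intro i; simp [hg]
  set A : Fin M → ℝ := fun m => x m * sin (φ m) ^ 2 with hA
  set B : Fin M → ℝ := fun m => x m * cos (φ m) ^ 2 with hB
  set E : Fin M → ℝ := fun m => x m * (sin (φ m) * cos (φ m)) with hE
  have hexp : ∀ i j : Fin M, g i j = A i * B j + B i * A j - 2 * (E i * E j) := by
    intro i j; simp only [hg, hA, hB, hE]; rw [sin_sub]; ring
  have hfull2 : ∑ i : Fin M, ∑ j : Fin M, g i j
      = (∑ m, A m) * (∑ m, B m) + (∑ m, B m) * (∑ m, A m)
        - 2 * ((∑ m, E m) * (∑ m, E m)) := by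
    calc ∑ i : Fin M, ∑ j : Fin M, g i j
        = ∑ i : Fin M, ∑ j : Fin M, (A i * B j + B i * A j - 2 * (E i * E j)) :=
          Finset.sum_congr rfl fun i _ => Finset.sum_congr rfl fun j _ => hexp i j
      _ = ∑ i : Fin M, ((∑ j, A i * B j) + (∑ j, B i * A j) - 2 * ∑ j, E i * E j) :=
          Finset.sum_congr rfl fun i _ => by
            rw [Finset.sum_sub_distrib, Finset.sum_add_distrib, Finset.mul_sum]
      _ = (∑ i, ∑ j, A i * B j) + (∑ i, ∑ j, B i * A j) - 2 * ∑ i, ∑ j, E i * E j := by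
          rw [Finset.sum_sub_distrib, Finset.sum_add_distrib, Finset.mul_sum]
      _ = (∑ m, A m) * (∑ m, B m) + (∑ m, B m) * (∑ m, A m)
            - 2 * ((∑ m, E m) * (∑ m, E m)) := by
          rw [Finset.sum_mul_sum, Finset.sum_mul_sum, Finset.sum_mul_sum]
  have hsplit : ∀ i : Fin M, ∑ j : Fin M, g i j
      = ∑ j ∈ Finset.Iio i, g i j + ∑ j ∈ Finset.Ioi i, g i j := by
    intro i
    have h1 : Disjoint (Finset.Iio i) (Finset.Ioi i) := by
      rw [Finset.disjoint_left]
      intro a ha ha'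
      rw [Finset.mem_Iio] at ha
      rw [Finset.mem_Ioi] at ha'
      exact absurd ha' (not_lt_of_gt ha)
    have h2 : i ∉ Finset.Iio i ∪ Finset.Ioi i := by simp
    have huniv : (Finset.univ : Finset (Fin M))
        = insert i (Finset.Iio i ∪ Finset.Ioi i) := by
      ext j
      simp only [Finset.mem_univ, Finset.mem_insert, Finset.mem_union, Finset.mem_Iio,
        Finset.mem_Ioi, true_iff]
      rcases lt_trichotomy j i with h | h | h <;> tauto
    rw [huniv, Finset.sum_insert h2, Finset.sum_union h1, hdiag, zero_add]
  have hswap : ∑ i : Fin M, ∑ j ∈ Finset.Ioi i, g i j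
      = ∑ i : Fin M, ∑ j ∈ Finset.Iio i, g i j := by
    rw [swap_sum' g]
    exact Finset.sum_congr rfl fun i _ => Finset.sum_congr rfl fun j _ => hsymm j i
  have hfull : ∑ i : Fin M, ∑ j : Fin M, g i j
      = 2 * ∑ i : Fin M, ∑ j ∈ Finset.Iio i, g i j := by
    rw [Finset.sum_congr rfl fun i _ => hsplit i, Finset.sum_add_distrib, hswap]
    ring
  have hQ2 : (∑ m, E m) ^ 2 = (∑ m, E m) * (∑ m, E m) := sq (∑ m, E m) ▸ (sq (∑ m, E m)).symm ▸ rfl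
  have := hfull.symm.trans hfull2
  have hc : (∑ m, B m) * (∑ m, A m) = (∑ m, A m) * (∑ m, B m) := mul_comm _ _
  have hp : (∑ m, E m) ^ 2 = (∑ m, E m) * (∑ m, E m) := by ring
  linarith

/-- Proposition 2: the CRLB-type function
`f(x) = (Σ_m x_m)/(Σ_{j<i} x_j x_i sin²(φ_i − φ_j))`, defined for nonnegative `x` with
positive denominator, is monotonically nonincreasing in each coordinate: if `y` agrees
with `x` off coordinate `m'` and `y_{m'} ≥ x_{m'}`, then `f(y) ≤ f(x)`. -/
theorem prop2_crlb_monotone (M : ℕ) (hM : 2 ≤ M) (φ x y : Fin M → ℝ)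
    (hx : ∀ m, 0 ≤ x m) (hy : ∀ m, 0 ≤ y m)
    (hxd : 0 < ∑ i : Fin M, ∑ j ∈ Finset.Iio i, x j * x i * sin (φ i - φ j) ^ 2)
    (hyd : 0 < ∑ i : Fin M, ∑ j ∈ Finset.Iio i, y j * y i * sin (φ i - φ j) ^ 2)
    (m' : Fin M) (hagree : ∀ m, m ≠ m' → y m = x m) (hmono : x m' ≤ y m') :
    (∑ m, y m) / (∑ i : Fin M, ∑ j ∈ Finset.Iio i, y j * y i * sin (φ i - φ j) ^ 2)
      ≤ (∑ m, x m) / (∑ i : Fin M, ∑ j ∈ Finset.Iio i, x j * x i * sin (φ i - φ j) ^ 2) := by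
  set t := y m' - x m' with ht_def
  have ht : 0 ≤ t := by simp only [ht_def]; linarith
  have hupd : ∀ g : Fin M → ℝ, ∑ m, y m * g m = (∑ m, x m * g m) + t * g m' := by
    intro g
    have h0 : ∑ m, (y m * g m - x m * g m) = t * g m' := by
      rw [Finset.sum_eq_single m']
      · rw [ht_def]; ring
      · intro b _ hb; rw [hagree b hb]; ring
      · intro h; exact absurd (Finset.mem_univ m') h
    rw [Finset.sum_sub_distrib] at h0
    linarith
  have hcs : sin (φ m') ^ 2 + cos (φ m') ^ 2 = 1 := sin_sq_add_cos_sq (φ m')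
  have hN : ∀ z : Fin M → ℝ,
      ∑ m, z m = (∑ m, z m * cos (φ m) ^ 2) + ∑ m, z m * sin (φ m) ^ 2 := by
    intro z
    rw [← Finset.sum_add_distrib]
    refine Finset.sum_congr rfl fun m _ => ?_
    have h := sin_sq_add_cos_sq (φ m)
    linear_combination (-(z m)) * h
  have hDx : ∑ i : Fin M, ∑ j ∈ Finset.Iio i, x j * x i * sin (φ i - φ j) ^ 2
      = (∑ m, x m * cos (φ m) ^ 2) * (∑ m, x m * sin (φ m) ^ 2)
        - (∑ m, x m * (sin (φ m) * cos (φ m))) ^ 2 := D_eq φ x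
  have hDy : ∑ i : Fin M, ∑ j ∈ Finset.Iio i, y j * y i * sin (φ i - φ j) ^ 2
      = ((∑ m, x m * cos (φ m) ^ 2) + t * cos (φ m') ^ 2)
          * ((∑ m, x m * sin (φ m) ^ 2) + t * sin (φ m') ^ 2)
        - ((∑ m, x m * (sin (φ m) * cos (φ m))) + t * (sin (φ m') * cos (φ m'))) ^ 2 := by
    rw [D_eq φ y, hupd (fun m => cos (φ m) ^ 2), hupd (fun m => sin (φ m) ^ 2),
      hupd (fun m => sin (φ m) * cos (φ m))]
  have hNy : ∑ m, y m = ((∑ m, x m * cos (φ m) ^ 2) + ∑ m, x m * sin (φ m) ^ 2) + t := by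
    rw [hN y, hupd (fun m => cos (φ m) ^ 2), hupd (fun m => sin (φ m) ^ 2)]
    linear_combination t * hcs
  have hNx : ∑ m, x m = (∑ m, x m * cos (φ m) ^ 2) + ∑ m, x m * sin (φ m) ^ 2 := hN x
  rw [hDx] at hxd ⊢
  rw [hDy] at hyd ⊢
  rw [hNx, hNy]
  set P := ∑ m, x m * cos (φ m) ^ 2
  set R := ∑ m, x m * sin (φ m) ^ 2
  set Q := ∑ m, x m * (sin (φ m) * cos (φ m))
  set c := cos (φ m')
  set s := sin (φ m')
  rw [div_le_div_iff₀ hyd hxd]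
  have key : P * R - Q ^ 2 ≤ (P + R) * (P * s ^ 2 + R * c ^ 2 - 2 * Q * s * c) := by
    nlinarith [sq_nonneg (P * s - Q * c), sq_nonneg (R * c - Q * s), hcs]
  nlinarith [mul_le_mul_of_nonneg_left key ht, hcs, sq_nonneg t]
end

section
/- For every integer M ≥ 2, all nonnegative reals x_1,…,x_M, all real angles φ_1,…,φ_M, and every index m' ∈ {1,…,M}: Σ_{1≤j<i≤M} x_j x_i sin²(φ_i − φ_j) ≤ (Σ_{m=1}^M x_m) · (Σ_{i≠m'} x_i sin²(φ_i − φ_{m'})). -/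
open Real Finset

private lemma swap_Iio_sum {M : ℕ} (f : Fin M → Fin M → ℝ) :
    ∑ i : Fin M, ∑ j ∈ Finset.Iio i, f i j = ∑ i : Fin M, ∑ j ∈ Finset.Ioi i, f j i := by
  rw [Finset.sum_sigma', Finset.sum_sigma']
  refine Finset.sum_nbij' (fun p ↦ ⟨p.2, p.1⟩) (fun p ↦ ⟨p.2, p.1⟩) ?_ ?_ ?_ ?_ ?_ <;> simp

private lemma lagrange_half {M : ℕ} (a b : Fin M → ℝ) :
    ∑ i : Fin M, ∑ j ∈ Finset.Iio i, (a j * b i - a i * b j) ^ 2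
      = (∑ i, a i ^ 2) * (∑ i, b i ^ 2) - (∑ i, a i * b i) ^ 2 := by
  set f : Fin M → Fin M → ℝ := fun i j => (a j * b i - a i * b j) ^ 2 with hf
  have hsymm : ∀ i j, f i j = f j i := by intro i j; simp only [hf]; ring
  have hdiag : ∀ i, f i i = 0 := by intro i; simp only [hf]; ring
  have hinner : ∀ i : Fin M, ∑ j : Fin M, f i j
      = (∑ k, a k ^ 2) * b i ^ 2 + (∑ k, b k ^ 2) * a i ^ 2
        - (∑ k, a k * b k) * (a i * b i) - (∑ k, a k * b k) * (a i * b i) := by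
    intro i
    refine Eq.symm ?_
    simp only [Finset.sum_mul, ← Finset.sum_add_distrib, ← Finset.sum_sub_distrib]
    exact Finset.sum_congr rfl fun j _ => by simp only [hf]; ring
  have htot : ∑ i : Fin M, ∑ j : Fin M, f i j
      = 2 * ((∑ i, a i ^ 2) * (∑ i, b i ^ 2) - (∑ i, a i * b i) ^ 2) := by
    rw [Finset.sum_congr rfl fun i _ => hinner i]
    simp only [Finset.sum_add_distrib, Finset.sum_sub_distrib, ← Finset.mul_sum]
    ring
  have hsplit : ∀ i : Fin M, ∑ j : Fin M, f i j
      = (∑ j ∈ Finset.Iio i, f i j) + f i i + ∑ j ∈ Finset.Ioi i, f i j := by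
    intro i
    have huniv : (Finset.univ : Finset (Fin M)) = insert i (Finset.Iio i ∪ Finset.Ioi i) := by
      ext j
      simp only [Finset.mem_univ, Finset.mem_insert, Finset.mem_union, Finset.mem_Iio,
        Finset.mem_Ioi, true_iff]
      rcases lt_trichotomy j i with h | h | h
      · exact Or.inr (Or.inl h)
      · exact Or.inl h
      · exact Or.inr (Or.inr h)
    have hdisj : Disjoint (Finset.Iio i) (Finset.Ioi i) :=
      Finset.disjoint_left.mpr fun j hj hj' =>
        absurd ((Finset.mem_Iio.mp hj).trans (Finset.mem_Ioi.mp hj')) (lt_irrefl j)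
    rw [huniv, Finset.sum_insert (by simp), Finset.sum_union hdisj]
    ring
  have h2 : ∑ i : Fin M, ∑ j : Fin M, f i j
      = 2 * ∑ i : Fin M, ∑ j ∈ Finset.Iio i, f i j := by
    rw [Finset.sum_congr rfl fun i _ => hsplit i, Finset.sum_add_distrib,
      Finset.sum_add_distrib]
    have hswap : ∑ i : Fin M, ∑ j ∈ Finset.Ioi i, f i j
        = ∑ i : Fin M, ∑ j ∈ Finset.Iio i, f i j := by
      rw [swap_Iio_sum f]
      exact Finset.sum_congr rfl fun i _ => Finset.sum_congr rfl fun j _ => hsymm i j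
    simp only [hdiag, Finset.sum_const_zero, add_zero, hswap]
    ring
  have := h2.symm.trans htot
  linarith

/-- Key inequality of Appendix B: for nonnegative `x_1,…,x_M` and any index `m'`,
`Σ_{j<i} x_j x_i sin²(φ_i − φ_j) ≤ (Σ_m x_m)·(Σ_{i≠m'} x_i sin²(φ_i − φ_{m'}))`,
i.e. `D(x) ≤ N(x)·∂D/∂x_{m'}(x)`. -/
theorem appendixB_key_inequality (M : ℕ) (hM : 2 ≤ M) (x φ : Fin M → ℝ)
    (hx : ∀ m, 0 ≤ x m) (m' : Fin M) :
    ∑ i : Fin M, ∑ j ∈ Finset.Iio i, x j * x i * sin (φ i - φ j) ^ 2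
      ≤ (∑ m, x m) * ∑ i ∈ Finset.univ.erase m', x i * sin (φ i - φ m') ^ 2 := by
  set a : Fin M → ℝ := fun i => Real.sqrt (x i) * Real.cos (φ i - φ m') with ha
  set b : Fin M → ℝ := fun i => Real.sqrt (x i) * Real.sin (φ i - φ m') with hb
  have hsq : ∀ i, Real.sqrt (x i) ^ 2 = x i := fun i => Real.sq_sqrt (hx i)
  have hpt : ∀ i j : Fin M,
      x j * x i * sin (φ i - φ j) ^ 2 = (a j * b i - a i * b j) ^ 2 := by
    intro i j
    have hphi : φ i - φ j = (φ i - φ m') - (φ j - φ m') := by ring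
    rw [hphi, Real.sin_sub, ha, hb]
    simp only
    linear_combination
      (-((Real.sin (φ i - φ m') * Real.cos (φ j - φ m')
          - Real.cos (φ i - φ m') * Real.sin (φ j - φ m')) ^ 2 * x j)) * hsq i
      + (-((Real.sin (φ i - φ m') * Real.cos (φ j - φ m')
          - Real.cos (φ i - φ m') * Real.sin (φ j - φ m')) ^ 2 * Real.sqrt (x i) ^ 2)) * hsq j
  have hLHS : ∑ i : Fin M, ∑ j ∈ Finset.Iio i, x j * x i * sin (φ i - φ j) ^ 2
      = (∑ i, a i ^ 2) * (∑ i, b i ^ 2) - (∑ i, a i * b i) ^ 2 := by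
    rw [← lagrange_half a b]
    exact Finset.sum_congr rfl fun i _ => Finset.sum_congr rfl fun j _ => hpt i j
  have hB : ∑ i ∈ Finset.univ.erase m', x i * sin (φ i - φ m') ^ 2 = ∑ i, b i ^ 2 := by
    have h0 : x m' * sin (φ m' - φ m') ^ 2 = 0 := by simp
    rw [Finset.sum_erase (s := Finset.univ)
      (f := fun i => x i * Real.sin (φ i - φ m') ^ 2) h0]
    refine Finset.sum_congr rfl fun i _ => ?_
    rw [hb]; simp only; rw [mul_pow, hsq i]
  have hA : (∑ i, a i ^ 2) ≤ ∑ m, x m := by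
    refine Finset.sum_le_sum fun i _ => ?_
    rw [ha]; simp only; rw [mul_pow, hsq i]
    nlinarith [Real.cos_sq_le_one (φ i - φ m'), hx i]
  have hBnn : 0 ≤ ∑ i, b i ^ 2 := Finset.sum_nonneg fun i _ => sq_nonneg _
  rw [hLHS, hB]
  have h1 : (∑ i, a i ^ 2) * (∑ i, b i ^ 2) ≤ (∑ m, x m) * (∑ i, b i ^ 2) :=
    mul_le_mul_of_nonneg_right hA hBnn
  nlinarith [sq_nonneg (∑ i, a i * b i)]
end

section
/- (Proposition 3) Fix C0 > 0 and γ̃ > 0. Let M ≥ 2 be any integer, φ_1,…,φ_M real angles with s_max := max_{i≠j} sin²(φ_i − φ_j) > 0, and η any vector in the unit simplex of dimension M for which the denominator Σ_{1≤j<i≤M} η_j η_i sin²(φ_i − φ_j) is positive. Then the equal-SNR CRLB satisfies CRLB(η) = C0·(Σ_m η_m γ̃)/(γ̃² Σ_{j<i} η_j η_i sin²(φ_i − φ_j)) ≥ 2C0/(γ̃ s_max). Consequently, defining CRLB*₂ := 4C0/(γ̃ s_max) (the optimal CRLB achievable with only two associated base stations at the best angle pair), one has CRLB*₂ ≤ 2·CRLB(η)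 for every M and every feasible η; in particular CRLB*₂ is at most twice the optimal CRLB in the limit of infinitely many base stations. -/
open Real Finset

lemma two_mul_offdiag_le_sq_sum {M : ℕ} (f : Fin M → ℝ) (hf : ∀ i, 0 ≤ f i) :
    2 * ∑ i : Fin M, ∑ j ∈ Finset.Iio i, f j * f i ≤ (∑ i, f i) ^ 2 := by
  have hswap : ∑ i : Fin M, ∑ j ∈ Finset.Iio i, f j * f i
      = ∑ j : Fin M, ∑ i ∈ Finset.Ioi j, f j * f i := by
    apply Finset.sum_comm' (fun i j => by simp [and_comm])
  have hsq : (∑ i, f i) ^ 2 = ∑ i : Fin M, ∑ j : Fin M, f i * f j := by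
    rw [sq, Finset.sum_mul_sum]
  rw [hsq, two_mul]
  have h1 : ∀ i : Fin M, ∑ j ∈ Finset.Iio i, f j * f i + ∑ j ∈ Finset.Ioi i, f i * f j
      ≤ ∑ j : Fin M, f i * f j := by
    intro i
    have hiii : ∑ j ∈ Finset.Iio i, f j * f i = ∑ j ∈ Finset.Iio i, f i * f j := by
      simp [mul_comm]
    rw [hiii, ← Finset.sum_union (by simp [Finset.disjoint_left]; exact fun a h => h.le)]
    apply Finset.sum_le_sum_of_subset_of_nonneg (Finset.subset_univ _)
    intro j _ _
    exact mul_nonneg (hf i) (hf j)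
  calc (∑ i : Fin M, ∑ j ∈ Finset.Iio i, f j * f i)
        + ∑ i : Fin M, ∑ j ∈ Finset.Iio i, f j * f i
      = ∑ i : Fin M, (∑ j ∈ Finset.Iio i, f j * f i + ∑ j ∈ Finset.Ioi i, f i * f j) := by
        rw [Finset.sum_add_distrib]
        exact congrArg (fun t => (∑ i : Fin M, ∑ j ∈ Finset.Iio i, f j * f i) + t) hswap
    _ ≤ ∑ i : Fin M, ∑ j : Fin M, f i * f j := Finset.sum_le_sum fun i _ => h1 i

/-- Proposition 3: with equal equivalent SNR `γ > 0` for all `M ≥ 2` base stations and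
`s_max := max_{i≠j} sin²(φ_i − φ_j) > 0`, every feasible time allocation `η` in the unit
simplex (with positive CRLB denominator) satisfies
`CRLB(η) = C0 (Σ_m η_m γ)/(γ² Σ_{j<i} η_j η_i sin²(φ_i − φ_j)) ≥ 2C0/(γ s_max)`.
Consequently the optimal two-BS CRLB `CRLB*₂ = 4C0/(γ s_max)` satisfies
`CRLB*₂ ≤ 2·CRLB(η)` for every `M` and every feasible `η`. -/
theorem prop3_two_bs_within_factor_two (C0 γ : ℝ) (hC0 : 0 < C0) (hγ : 0 < γ)
    (M : ℕ) (hM : 2 ≤ M) (φ : Fin M → ℝ) (smax : ℝ)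
    (hsmax : IsGreatest {s : ℝ | ∃ i j : Fin M, i ≠ j ∧ s = sin (φ i - φ j) ^ 2} smax)
    (hpos : 0 < smax)
    (η : Fin M → ℝ) (hη : ∀ m, 0 ≤ η m) (hsum : ∑ m, η m = 1)
    (hden : 0 < ∑ i : Fin M, ∑ j ∈ Finset.Iio i, η j * η i * sin (φ i - φ j) ^ 2) :
    2 * C0 / (γ * smax) ≤
      C0 * (∑ m, η m * γ) /
        (γ ^ 2 * ∑ i : Fin M, ∑ j ∈ Finset.Iio i, η j * η i * sin (φ i - φ j) ^ 2)
    ∧ 4 * C0 / (γ * smax) ≤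
      2 * (C0 * (∑ m, η m * γ) /
        (γ ^ 2 * ∑ i : Fin M, ∑ j ∈ Finset.Iio i, η j * η i * sin (φ i - φ j) ^ 2)) := by
  set D := ∑ i : Fin M, ∑ j ∈ Finset.Iio i, η j * η i * sin (φ i - φ j) ^ 2 with hD
  have hnum : (∑ m, η m * γ) = γ := by rw [← Finset.sum_mul, hsum, one_mul]
  -- Each sin² ≤ smax, so D ≤ smax * Σ_{j<i} η_j η_i ≤ smax/2.
  have hDle : 2 * D ≤ smax := by
    have hstep : D ≤ smax * ∑ i : Fin M, ∑ j ∈ Finset.Iio i, η j * η i := by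
      rw [Finset.mul_sum]
      apply Finset.sum_le_sum
      intro i _
      rw [Finset.mul_sum]
      apply Finset.sum_le_sum
      intro j hj
      have hne : i ≠ j := fun h => (Finset.mem_Iio.mp hj).ne h.symm
      have hmem : sin (φ i - φ j) ^ 2 ∈ {s : ℝ | ∃ i j : Fin M, i ≠ j ∧ s = sin (φ i - φ j) ^ 2} :=
        ⟨i, j, hne, rfl⟩
      have hle := hsmax.2 hmem
      have h0 : 0 ≤ η j * η i := mul_nonneg (hη j) (hη i)
      calc η j * η i * sin (φ i - φ j) ^ 2 ≤ η j * η i * smax := by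
            exact mul_le_mul_of_nonneg_left hle h0
        _ = smax * (η j * η i) := by ring
    have hhalf : 2 * ∑ i : Fin M, ∑ j ∈ Finset.Iio i, η j * η i ≤ 1 := by
      have := two_mul_offdiag_le_sq_sum η hη
      rwa [hsum, one_pow] at this
    nlinarith [hpos]
  have hmain : 2 * C0 / (γ * smax) ≤ C0 * (∑ m, η m * γ) / (γ ^ 2 * D) := by
    rw [hnum]
    rw [div_le_div_iff₀ (by positivity) (by positivity)]
    have : C0 * γ * (γ * smax) = C0 * γ ^ 2 * smax := by ring
    nlinarith [mul_pos hC0 (mul_pos (pow_pos hγ 2) hden), sq_nonneg γ,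
      mul_le_mul_of_nonneg_left hDle (le_of_lt (mul_pos hC0 (pow_pos hγ 2)))]
  refine ⟨hmain, ?_⟩
  have : 4 * C0 / (γ * smax) = 2 * (2 * C0 / (γ * smax)) := by ring
  rw [this]
  linarith [hmain]
end

section
/- (Lemma 2, interference-free case) Let K ≥ 1 and M ≥ 2 be integers. Define a localization schedule with N time slots to be a family b_{k,m,n} ∈ {0,1} (k ∈ {1,…,K}, m ∈ {1,…,M}, n ∈ {1,…,N}) satisfying: (i) Σ_{k} b_{k,m,n} ≤ 1 for every m, n; (ii) Σ_{m} b_{k,m,n} ≤ 1 for every k, n; (iii) Σ_{n} b_{k,m,n} ≤ 1 for every k, m; and (iv) Σ_{m,n} b_{k,m,n} ≥ 2 for every k. Then the smallest N for which a localization schedule exists equals max(⌈2K/M⌉, 2). -/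
/-!
Counting: a target needs two measurements in two different slots, so `N ≥ 2`, and the `2K`
measurements occupy distinct (BS, slot) cells, so `2K ≤ MN`.

Conversely, when `M, N ≥ 2` and `2K ≤ MN`, it suffices to split `2K` distinct cells of the
`M × N` grid into `K` pairs, each pair in two different rows and two different columns.
Walk through the grid along the diagonal `t ↦ (t mod M, t mod N)`; it closes up after
`L = lcm M N` steps, so shift the column by one after every lap:
`t ↦ (t mod M, (t + ⌊t / L⌋) mod N)`. The lap number `⌊t / L⌋ < gcd M N` is recovered from
the cell modulo `gcd M N`, so this walk is injective on `t < MN`. Give target `k` the cells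
`2k` and `2k + 1`. Their rows differ because `M ≥ 2`; their columns differ by `1`, or by `2`
when `2k + 1` ends a lap, in which case `L` is odd, so `N` is odd and `N ≠ 2`.
-/

open Finset

/-- A localization schedule: `b k m n = 1` iff BS `m` measures target `k` in slot `n`;
each BS senses at most one target per slot, each target reflects to at most one BS per
slot, each (target, BS) pair is used in at most one slot, and each target obtains at
least two measurements. -/
def IsSchedule (K M N : ℕ) (b : Fin K → Fin M → Fin N → ℕ) : Prop :=
  (∀ k m n, b k m n ≤ 1) ∧
  (∀ m n, ∑ k, b k m n ≤ 1) ∧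
  (∀ k n, ∑ m, b k m n ≤ 1) ∧
  (∀ k m, ∑ n, b k m n ≤ 1) ∧
  (∀ k, 2 ≤ ∑ m, ∑ n, b k m n)

namespace IsSchedule

variable {K M N : ℕ} {b : Fin K → Fin M → Fin N → ℕ}

theorem two_mul_le_mul (hb : IsSchedule K M N b) : 2 * K ≤ M * N :=
  calc 2 * K = ∑ _k : Fin K, 2 := by simp [mul_comm]
    _ ≤ ∑ k, ∑ m, ∑ n, b k m n := sum_le_sum fun k _ => hb.2.2.2.2 k
    _ = ∑ m, ∑ n, ∑ k, b k m n := sum_comm_cycle.symm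
    _ ≤ ∑ _m : Fin M, ∑ _n : Fin N, 1 := sum_le_sum fun m _ => sum_le_sum fun n _ => hb.2.1 m n
    _ = M * N := by simp

theorem two_le (hb : IsSchedule K M N b) (k : Fin K) : 2 ≤ N :=
  calc 2 ≤ ∑ m, ∑ n, b k m n := hb.2.2.2.2 k
    _ = ∑ n, ∑ m, b k m n := sum_comm
    _ ≤ ∑ _n : Fin N, 1 := sum_le_sum fun n _ => hb.2.2.1 k n
    _ = N := by simp

end IsSchedule

theorem Finset.sum_boole_le_one {α : Type*} [Fintype α] {p : α → Prop} [DecidablePred p]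
    (hp : ∀ a b, p a → p b → a = b) : ∑ a, (if p a then 1 else 0 : ℕ) ≤ 1 := by
  rw [sum_boole, Nat.cast_id]
  exact card_le_one.2 fun a ha b hb => hp a b (mem_filter.1 ha).2 (mem_filter.1 hb).2

theorem isSchedule_of_pairing {K M N : ℕ} (e : Fin K → Fin 2 → Fin M × Fin N)
    (he : Function.Injective (Function.uncurry e))
    (hrow : ∀ k, Function.Injective fun i => (e k i).1)
    (hcol : ∀ k, Function.Injective fun i => (e k i).2) :
    IsSchedule K M N fun k m n => if ∃ i, e k i = (m, n) then 1 else 0 := by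
  refine ⟨fun k m n => ?_, fun m n => ?_, fun k n => ?_, fun k m => ?_, fun k => ?_⟩
  · exact ite_le_one le_rfl zero_le_one
  · refine sum_boole_le_one fun k k' ⟨i, hi⟩ ⟨i', hi'⟩ => ?_
    exact congrArg Prod.fst (@he (k, i) (k', i') (hi.trans hi'.symm))
  · refine sum_boole_le_one fun m m' ⟨i, hi⟩ ⟨i', hi'⟩ => ?_
    obtain rfl : i = i' := hcol k (by simp [hi, hi'])
    simpa using hi.symm.trans hi'
  · refine sum_boole_le_one fun n n' ⟨i, hi⟩ ⟨i', hi'⟩ => ?_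
    obtain rfl : i = i' := hrow k (by simp [hi, hi'])
    simpa using hi.symm.trans hi'
  · have hinj : Function.Injective (e k) := fun i i' h => hrow k (congrArg Prod.fst h)
    refine le_of_eq ?_
    calc 2 = #(univ.image (e k)) := by rw [card_image_of_injective _ hinj, card_fin]
      _ = ∑ c : Fin M × Fin N, if ∃ i, e k i = c then 1 else 0 := by
        rw [sum_boole, Nat.cast_id]
        congr 1
        ext c
        simp
      _ = ∑ m, ∑ n, if ∃ i, e k i = (m, n) then 1 else 0 := Fintype.sum_prod_type _

theorem Nat.ModEq.lcm {a b m n : ℕ} (hm : a ≡ b [MOD m]) (hn : a ≡ b [MOD n]) :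
    a ≡ b [MOD Nat.lcm m n] :=
  Nat.modEq_of_dvd <| Int.natCast_dvd.2 <|
    Nat.lcm_dvd (Int.natCast_dvd.1 hm.dvd) (Int.natCast_dvd.1 hn.dvd)

theorem Nat.not_modEq_add {n d : ℕ} (t : ℕ) (hd : 0 < d) (hdn : d < n) :
    ¬ t ≡ t + d [MOD n] := fun h => by
  rw [Nat.modEq_iff_dvd' (Nat.le_add_right t d), Nat.add_sub_cancel_left] at h
  exact (Nat.le_of_dvd hd h).not_gt hdn

def diagCell (M N t : ℕ) : ℕ × ℕ := (t % M, (t + t / Nat.lcm M N) % N)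

theorem diagCell_injOn (M N : ℕ) : Set.InjOn (diagCell M N) (Set.Iio (M * N)) := by
  intro t ht t' ht' h
  obtain ⟨hrow, hcol⟩ := Prod.mk.inj h
  change t ≡ t' [MOD M] at hrow
  change t + t / M.lcm N ≡ t' + t' / M.lcm N [MOD N] at hcol
  have hlap_lt {s : ℕ} (hs : s ∈ Set.Iio (M * N)) : s / M.lcm N < M.gcd N := by
    refine Nat.div_lt_of_lt_mul ?_
    rwa [mul_comm, Nat.gcd_mul_lcm]
  have hlap : t / M.lcm N = t' / M.lcm N :=
    ((hrow.of_dvd (Nat.gcd_dvd_left M N)).add_left_cancel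
      (hcol.of_dvd (Nat.gcd_dvd_right M N))).eq_of_lt_of_lt (hlap_lt ht) (hlap_lt ht')
  rw [hlap] at hcol
  have hmod : t % M.lcm N = t' % M.lcm N := hrow.lcm (hcol.add_right_cancel' _)
  rw [← Nat.div_add_mod t (M.lcm N), ← Nat.div_add_mod t' (M.lcm N), hlap, hmod]

theorem diagCell_fst_ne {M : ℕ} (hM : 2 ≤ M) (N t : ℕ) :
    (diagCell M N t).1 ≠ (diagCell M N (t + 1)).1 :=
  Nat.not_modEq_add t one_pos hM

theorem diagCell_snd_ne (M : ℕ) {N : ℕ} (hN : 2 ≤ N) (j : ℕ) :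
    (diagCell M N (2 * j)).2 ≠ (diagCell M N (2 * j + 1)).2 := by
  change ¬ _ ≡ _ [MOD N]
  rw [Nat.succ_div]
  split_ifs with hlap
  · have hN2 : 2 < N := by
      rcases hN.eq_or_lt with rfl | hN2
      · have := (Nat.dvd_lcm_right M 2).trans hlap
        omega
      · exact hN2
    convert Nat.not_modEq_add (2 * j + 2 * j / M.lcm N) two_pos hN2 using 2
    ring
  · convert Nat.not_modEq_add (2 * j + 2 * j / M.lcm N) one_pos hN using 2
    ring

theorem injective_fin_two_of_ne {α : Type*} {f : Fin 2 → α} (h : f 0 ≠ f 1) :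
    Function.Injective f := by
  intro i j hij
  fin_cases i <;> fin_cases j
  exacts [rfl, absurd hij h, absurd hij.symm h, rfl]

theorem exists_isSchedule {K M N : ℕ} (hM : 2 ≤ M) (hN : 2 ≤ N) (hKMN : 2 * K ≤ M * N) :
    ∃ b, IsSchedule K M N b := by
  have hlt (k : Fin K) (i : Fin 2) : 2 * (k : ℕ) + i < M * N := by omega
  let e (k : Fin K) (i : Fin 2) : Fin M × Fin N :=
    (⟨(diagCell M N (2 * k + i)).1, Nat.mod_lt _ (by omega)⟩,
      ⟨(diagCell M N (2 * k + i)).2, Nat.mod_lt _ (by omega)⟩)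
  refine ⟨_, isSchedule_of_pairing e ?_ (fun k => ?_) fun k => ?_⟩
  · rintro ⟨k, i⟩ ⟨k', i'⟩ h
    have := diagCell_injOn M N (hlt k i) (hlt k' i')
      (by simpa [e, Prod.ext_iff, Fin.ext_iff] using h)
    simp only [Prod.mk.injEq, Fin.ext_iff]
    omega
  · exact injective_fin_two_of_ne (by simpa [e, Fin.ext_iff] using diagCell_fst_ne hM N (2 * k))
  · exact injective_fin_two_of_ne (by simpa [e, Fin.ext_iff] using diagCell_snd_ne M hN k)

theorem ceil_div_le_iff {a b n : ℕ} (hb : 0 < b) : ⌈(a / b : ℚ)⌉₊ ≤ n ↔ a ≤ b * n := by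
  rw [Nat.ceil_le, div_le_iff₀ (by exact_mod_cast hb), mul_comm]
  exact_mod_cast Iff.rfl

/-- Lemma 2, interference-free case: for `K ≥ 1` targets and `M ≥ 2` base stations, the
smallest number `N` of time slots admitting a localization schedule equals
`max ⌈2K/M⌉ 2`. -/
theorem lemma2_min_slots_interference_free (K M : ℕ) (hK : 1 ≤ K) (hM : 2 ≤ M) :
    IsLeast {N : ℕ | ∃ b : Fin K → Fin M → Fin N → ℕ, IsSchedule K M N b}
      (max ⌈(2 * K : ℚ) / M⌉₊ 2) := by
  have hceil {N : ℕ} : ⌈(2 * K : ℚ) / M⌉₊ ≤ N ↔ 2 * K ≤ M * N := by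
    exact_mod_cast ceil_div_le_iff (a := 2 * K) (by omega)
  refine ⟨exists_isSchedule hM (le_max_right _ _) (hceil.1 (le_max_left _ _)), ?_⟩
  rintro N ⟨b, hb⟩
  exact max_le (hceil.2 hb.two_mul_le_mul) (hb.two_le ⟨0, hK⟩)
end

section
/- (Lemma 3, interference-free case) Let M ≥ 2 and N ≥ 2 be integers. Define a localization schedule for K targets with N time slots to be a family b_{k,m,n} ∈ {0,1} (k ∈ {1,…,K}, m ∈ {1,…,M}, n ∈ {1,…,N}) satisfying: (i) Σ_{k} b_{k,m,n} ≤ 1 for every m, n; (ii) Σ_{m} b_{k,m,n} ≤ 1 for every k, n; (iii) Σ_{n} b_{k,m,n} ≤ 1 for every k, m; and (iv) Σ_{m,n} b_{k,m,n} ≥ 2 for every k. Then the largest K for which such a schedule exists equals ⌊MN/2⌋. -/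
/-!
Each target needs two of the `M * N` (base station, slot) cells and no cell serves two targets,
so `2 * K ≤ M * N`. Conversely, list the cells row by row after cyclically shifting every odd
column down by one row: consecutive cells `j`, `j + 1` then lie in different columns and, for
even `j`, in different rows, so the pairs of cells `2k`, `2k + 1` schedule `⌊MN/2⌋` targets.
-/

open Finset

open Function

theorem IsSchedule.two_mul_le {K M N : ℕ} {b : Fin K → Fin M → Fin N → ℕ}
    (hb : IsSchedule K M N b) : 2 * K ≤ M * N :=
  calc 2 * K = ∑ _k : Fin K, 2 := by simp [mul_comm]
    _ ≤ ∑ k, ∑ m, ∑ n, b k m n := sum_le_sum fun k _ => hb.2.2.2.2 k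
    _ = ∑ m, ∑ n, ∑ k, b k m n := by
      rw [sum_comm]; exact sum_congr rfl fun m _ => sum_comm
    _ ≤ ∑ _m : Fin M, ∑ _n : Fin N, 1 := sum_le_sum fun m _ => sum_le_sum fun n _ => hb.2.1 m n
    _ = M * N := by simp

theorem Nat.mod_ne_add_one_mod {n : ℕ} (hn : 2 ≤ n) (a : ℕ) : a % n ≠ (a + 1) % n := by
  intro h
  have := Nat.sub_mod_eq_zero_of_mod_eq h.symm
  rw [Nat.add_sub_cancel_left, Nat.one_mod_eq_zero_iff] at this
  omega

theorem sum_ite_eq_le_one_of_injective {ι α : Type*} [Fintype ι] [DecidableEq α] {f : ι → α}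
    (hf : Injective f) (a : α) : ∑ i, (if f i = a then 1 else 0 : ℕ) ≤ 1 := by
  rw [sum_boole, Nat.cast_id]
  exact card_le_one.2 fun i hi j hj => hf ((mem_filter.1 hi).2.trans (mem_filter.1 hj).2.symm)

theorem sum_ite_eq_fst {α β : Type*} [Fintype α] [DecidableEq α] [DecidableEq β] (p : α × β)
    (b : β) : ∑ a, (if p = (a, b) then 1 else 0 : ℕ) = if p.2 = b then 1 else 0 := by
  simp only [Prod.ext_iff, ite_and, Fintype.sum_ite_eq]

theorem sum_ite_eq_snd {α β : Type*} [Fintype β] [DecidableEq α] [DecidableEq β] (p : α × β)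
    (a : α) : ∑ b, (if p = (a, b) then 1 else 0 : ℕ) = if p.1 = a then 1 else 0 := by
  simp only [Prod.ext_iff, and_comm (a := p.1 = a), ite_and, Fintype.sum_ite_eq]

theorem ite_eq_add_ite_eq_le_one {α : Type*} [DecidableEq α] {x y : α} (h : x ≠ y) (a : α) :
    ((if x = a then 1 else 0) + if y = a then 1 else 0 : ℕ) ≤ 1 := by
  split_ifs <;> simp_all

section
variable {K M N : ℕ}

def cellSchedule (c : Fin K × Fin 2 → Fin M × Fin N) (k : Fin K) (m : Fin M) (n : Fin N) : ℕ :=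
  ∑ i, if c (k, i) = (m, n) then 1 else 0

theorem isSchedule_cellSchedule {c : Fin K × Fin 2 → Fin M × Fin N} (hc : Injective c)
    (hrow : ∀ k, (c (k, 0)).1 ≠ (c (k, 1)).1) (hcol : ∀ k, (c (k, 0)).2 ≠ (c (k, 1)).2) :
    IsSchedule K M N (cellSchedule c) := by
  refine ⟨fun k m n => ?_, fun m n => ?_, fun k n => ?_, fun k m => ?_, fun k => ?_⟩
  · exact sum_ite_eq_le_one_of_injective (hc.comp (Prod.mk_right_injective k)) _
  · unfold cellSchedule
    rw [← Fintype.sum_prod_type']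
    exact sum_ite_eq_le_one_of_injective hc _
  · unfold cellSchedule
    rw [sum_comm]
    simp only [sum_ite_eq_fst, Fin.sum_univ_two]
    exact ite_eq_add_ite_eq_le_one (hcol k) n
  · unfold cellSchedule
    rw [sum_comm]
    simp only [sum_ite_eq_snd, Fin.sum_univ_two]
    exact ite_eq_add_ite_eq_le_one (hrow k) m
  · unfold cellSchedule
    rw [← Fintype.sum_prod_type', sum_comm]
    simp

def shiftOddColumns (p : Fin M × Fin N) : Fin M × Fin N :=
  (⟨(p.1 + p.2 % 2) % M, Nat.mod_lt _ p.1.pos⟩, p.2)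

theorem shiftOddColumns_injective : Injective (shiftOddColumns (M := M) (N := N)) := by
  rintro ⟨q, c⟩ ⟨q', c'⟩ h
  obtain ⟨hq, rfl : c = c'⟩ := Prod.ext_iff.1 h
  have hmod : (q : ℕ) ≡ q' [MOD M] := Nat.ModEq.add_right_cancel' _ (Fin.val_eq_of_eq hq)
  rw [Nat.ModEq, Nat.mod_eq_of_lt q.2, Nat.mod_eq_of_lt q'.2] at hmod
  rw [Fin.ext hmod]

def zigzag (j : Fin (M * N)) : Fin M × Fin N :=
  shiftOddColumns (finProdFinEquiv.symm j)

theorem zigzag_injective : Injective (zigzag (M := M) (N := N)) :=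
  shiftOddColumns_injective.comp finProdFinEquiv.symm.injective

theorem zigzag_fst_val (j : Fin (M * N)) : ((zigzag j).1 : ℕ) = (j / N + j % N % 2) % M := by
  simp [zigzag, shiftOddColumns, finProdFinEquiv_symm_apply]

theorem zigzag_snd_val (j : Fin (M * N)) : ((zigzag j).2 : ℕ) = j % N := by
  simp [zigzag, shiftOddColumns, finProdFinEquiv_symm_apply]

theorem div_add_mod_mod_two_adjacent (hN : 0 < N) {j : ℕ} (hj : Even j) :
    (j + 1) / N + (j + 1) % N % 2 = j / N + j % N % 2 + 1 ∨
      j / N + j % N % 2 = (j + 1) / N + (j + 1) % N % 2 + 1 := by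
  have hdecomp := Nat.mod_add_div j N
  have hlt := Nat.mod_lt j hN
  rcases Nat.lt_or_ge (j % N + 1) N with hsame | hwrap
  · have := (Nat.div_mod_unique hN).2 ⟨show j % N + 1 + N * (j / N) = j + 1 by omega, hsame⟩
    omega
  · have hnext : N * (j / N + 1) = j + 1 := by rw [mul_add]; omega
    have := (Nat.div_mod_unique hN).2 ⟨(zero_add _).trans hnext, hN⟩
    -- `j` ends a row, which forces `N` odd, so its column `N - 1` is even
    obtain ⟨t, ht⟩ : Odd N := (Nat.odd_mul.1 (hnext ▸ hj.add_one)).1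
    omega

theorem zigzag_fst_ne (hM : 2 ≤ M) {j j' : Fin (M * N)} (hj : Even (j : ℕ))
    (hj' : (j' : ℕ) = j + 1) : (zigzag j).1 ≠ (zigzag j').1 := by
  rw [Ne, Fin.ext_iff, zigzag_fst_val, zigzag_fst_val, hj']
  rcases div_add_mod_mod_two_adjacent j'.modNat.pos hj with h | h <;> rw [h]
  · exact Nat.mod_ne_add_one_mod hM _
  · exact (Nat.mod_ne_add_one_mod hM _).symm

theorem zigzag_snd_ne (hN : 2 ≤ N) {j j' : Fin (M * N)} (hj' : (j' : ℕ) = j + 1) :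
    (zigzag j).2 ≠ (zigzag j').2 := by
  rw [Ne, Fin.ext_iff, zigzag_snd_val, zigzag_snd_val, hj']
  exact Nat.mod_ne_add_one_mod hN _

def zigzagPairs (h : K * 2 ≤ M * N) (p : Fin K × Fin 2) : Fin M × Fin N :=
  zigzag (Fin.castLE h (finProdFinEquiv p))

theorem zigzagPairs_injective (h : K * 2 ≤ M * N) : Injective (zigzagPairs h) :=
  zigzag_injective.comp ((Fin.castLE_injective h).comp finProdFinEquiv.injective)

theorem zigzagPairs_fst_ne (hM : 2 ≤ M) (h : K * 2 ≤ M * N) (k : Fin K) :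
    (zigzagPairs h (k, 0)).1 ≠ (zigzagPairs h (k, 1)).1 :=
  zigzag_fst_ne hM (by simp) (by simp [add_comm])

theorem zigzagPairs_snd_ne (hN : 2 ≤ N) (h : K * 2 ≤ M * N) (k : Fin K) :
    (zigzagPairs h (k, 0)).2 ≠ (zigzagPairs h (k, 1)).2 :=
  zigzag_snd_ne hN (by simp [add_comm])
end

/-- Lemma 3, interference-free case: with `M ≥ 2` base stations and `N ≥ 2` time slots,
the largest number `K` of targets that can be effectively localized equals `⌊MN/2⌋`. -/
theorem lemma3_max_targets_interference_free (M N : ℕ) (hM : 2 ≤ M) (hN : 2 ≤ N) :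
    IsGreatest {K : ℕ | ∃ b : Fin K → Fin M → Fin N → ℕ, IsSchedule K M N b}
      (M * N / 2) := by
  have hpairs : M * N / 2 * 2 ≤ M * N := Nat.div_mul_le_self _ 2
  refine ⟨⟨_, isSchedule_cellSchedule (zigzagPairs_injective hpairs)
    (zigzagPairs_fst_ne hM hpairs) (zigzagPairs_snd_ne hN hpairs)⟩, ?_⟩
  rintro K ⟨b, hb⟩
  exact (Nat.le_div_iff_mul_le two_pos).2 (by linarith [hb.two_mul_le])
end
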